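/- arXiv:2602.19169 — 2 statements merged into one kernel-verified Lean document; each statement's English description precedes it below -/
import Mathlib

section
/- (Proposition: Spectral Norm Bound, orthogonal-columns form) Let Ã, B̃ be obtained from A ∈ ℝ^{d_in × r}, B ∈ ℝ^{d_out × r} by per-component clipping with threshold τ > 0. If the columns of Ã are pairwise orthogonal, then ‖Ã B̃ᵀ‖₂ ≤ ‖Ã B̃ᵀ‖_F ≤ √r · τ. -/
open Matrix

/-- Spectral norm (largest singular value, i.e. the ℓ²→ℓ² operator norm) of a real matrix. -/
noncomputable def specNorm {m n : ℕ} (M : Matrix (Fin m) (Fin n) ℝ) : ℝ :=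
  ‖LinearMap.toContinuousLinearMap (Matrix.toEuclideanLin M)‖

/-- Frobenius norm: ‖M‖_F = √(Σ_{i,j} M_{ij}²). -/
noncomputable def frobNorm {m n : ℕ} (M : Matrix (Fin m) (Fin n) ℝ) : ℝ :=
  Real.sqrt (∑ i, ∑ j, M i j ^ 2)

/-- Euclidean (ℓ²) norm of the `c`-th column of a matrix. -/
noncomputable def colNorm {d r : ℕ} (A : Matrix (Fin d) (Fin r) ℝ) (c : Fin r) : ℝ :=
  Real.sqrt (∑ i, A i c ^ 2)

/-- σ_c = ‖A_{:,c}‖₂ · ‖B_{:,c}‖₂. -/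
noncomputable def sigmaCol {din dout r : ℕ} (A : Matrix (Fin din) (Fin r) ℝ)
    (B : Matrix (Fin dout) (Fin r) ℝ) (c : Fin r) : ℝ :=
  colNorm A c * colNorm B c

/-- s_c = max(1, σ_c/τ). -/
noncomputable def sCol {din dout r : ℕ} (A : Matrix (Fin din) (Fin r) ℝ)
    (B : Matrix (Fin dout) (Fin r) ℝ) (τ : ℝ) (c : Fin r) : ℝ :=
  max 1 (sigmaCol A B c / τ)

/-- Clipped first factor: Ã_{:,c} = A_{:,c}/√(s_c). -/
noncomputable def clipA {din dout r : ℕ} (A : Matrix (Fin din) (Fin r) ℝ)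
    (B : Matrix (Fin dout) (Fin r) ℝ) (τ : ℝ) : Matrix (Fin din) (Fin r) ℝ :=
  Matrix.of fun i c => A i c / Real.sqrt (sCol A B τ c)

/-- Clipped second factor: B̃_{:,c} = B_{:,c}/√(s_c). -/
noncomputable def clipB {din dout r : ℕ} (A : Matrix (Fin din) (Fin r) ℝ)
    (B : Matrix (Fin dout) (Fin r) ℝ) (τ : ℝ) : Matrix (Fin dout) (Fin r) ℝ :=
  Matrix.of fun i c => B i c / Real.sqrt (sCol A B τ c)

lemma spec_le_frob : ∀ {m n : ℕ} (M : Matrix (Fin m) (Fin n) ℝ),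
    specNorm M ≤ frobNorm M := by
  intro m n M
  apply ContinuousLinearMap.opNorm_le_bound _ (Real.sqrt_nonneg _)
  intro x
  rw [LinearMap.coe_toContinuousLinearMap']
  have hx : ‖x‖ = Real.sqrt (∑ j, x j ^ 2) := by
    rw [EuclideanSpace.norm_eq]
    congr 1; apply Finset.sum_congr rfl; intro j _
    rw [Real.norm_eq_abs, sq_abs]
  have hMx : ∀ i, Matrix.toEuclideanLin M x i = ∑ j, M i j * x j := by
    intro i
    simp [Matrix.toEuclideanLin_apply, Matrix.mulVec, dotProduct]
  have hnorm : ‖Matrix.toEuclideanLin M x‖ = Real.sqrt (∑ i, (∑ j, M i j * x j) ^ 2) := by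
    rw [EuclideanSpace.norm_eq]
    congr 1; apply Finset.sum_congr rfl; intro i _
    rw [Real.norm_eq_abs, sq_abs, hMx]
  rw [hnorm, hx]
  show _ ≤ Real.sqrt (∑ i, ∑ j, M i j ^ 2) * _
  rw [← Real.sqrt_mul (by positivity)]
  apply Real.sqrt_le_sqrt
  rw [Finset.sum_mul]
  apply Finset.sum_le_sum
  intro i _
  exact Finset.sum_mul_sq_le_sq_mul_sq _ _ _

/-- Spectral norm bound, orthogonal-columns form: if the columns of `Ã` are pairwise
orthogonal, then `‖Ã B̃ᵀ‖₂ ≤ ‖Ã B̃ᵀ‖_F ≤ √r · τ`. -/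
theorem specNorm_clip_le_frobNorm_le {din dout r : ℕ}
    (A : Matrix (Fin din) (Fin r) ℝ) (B : Matrix (Fin dout) (Fin r) ℝ)
    (τ : ℝ) (hτ : 0 < τ)
    (horth : ∀ c c' : Fin r, c ≠ c' → ∑ i, clipA A B τ i c * clipA A B τ i c' = 0) :
    specNorm (clipA A B τ * (clipB A B τ)ᵀ) ≤ frobNorm (clipA A B τ * (clipB A B τ)ᵀ) ∧
    frobNorm (clipA A B τ * (clipB A B τ)ᵀ) ≤ Real.sqrt r * τ := by
  refine ⟨spec_le_frob _, ?_⟩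
  set f : Fin din → Fin r → ℝ := fun i c => clipA A B τ i c with hf
  set g : Fin dout → Fin r → ℝ := fun j c => clipB A B τ j c with hg
  have hs1 : ∀ c, (1 : ℝ) ≤ sCol A B τ c := fun c => le_max_left _ _
  have hspos : ∀ c, (0 : ℝ) < sCol A B τ c := fun c => lt_of_lt_of_le one_pos (hs1 c)
  -- expansion of the squared Frobenius norm
  have key : ∑ i, ∑ j, ((clipA A B τ * (clipB A B τ)ᵀ) i j) ^ 2
      = ∑ c, ∑ c', (∑ i, f i c * f i c') * (∑ j, g j c * g j c') := by
    simp only [Matrix.mul_apply, Matrix.transpose_apply]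
    show ∑ i, ∑ j, (∑ c, f i c * g j c) ^ 2 = _
    have h1 : ∀ i j, (∑ c, f i c * g j c) ^ 2
        = ∑ c, ∑ c', (f i c * f i c') * (g j c * g j c') := by
      intro i j
      rw [sq, Finset.sum_mul_sum]
      apply Finset.sum_congr rfl; intro c _
      apply Finset.sum_congr rfl; intro c' _
      ring
    have h2 : ∀ c c', (∑ i, f i c * f i c') * (∑ j, g j c * g j c')
        = ∑ i, ∑ j, f i c * f i c' * (g j c * g j c') := by
      intro c c'; rw [Finset.sum_mul_sum]
    simp only [h1, h2]
    calc ∑ i, ∑ j, ∑ c, ∑ c', f i c * f i c' * (g j c * g j c')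
        = ∑ i, ∑ c, ∑ c', ∑ j, f i c * f i c' * (g j c * g j c') := by
          refine Finset.sum_congr rfl fun i _ => ?_
          rw [Finset.sum_comm]
          exact Finset.sum_congr rfl fun c _ => Finset.sum_comm
      _ = ∑ c, ∑ i, ∑ c', ∑ j, f i c * f i c' * (g j c * g j c') := Finset.sum_comm
      _ = ∑ c, ∑ c', ∑ i, ∑ j, f i c * f i c' * (g j c * g j c') :=
          Finset.sum_congr rfl fun c _ => Finset.sum_comm
  -- orthogonality kills off-diagonal terms
  have key2 : ∑ i, ∑ j, ((clipA A B τ * (clipB A B τ)ᵀ) i j) ^ 2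
      = ∑ c, (∑ i, f i c ^ 2) * (∑ j, g j c ^ 2) := by
    rw [key]
    apply Finset.sum_congr rfl; intro c _
    rw [Finset.sum_eq_single c]
    · simp [sq]
    · intro c' _ hne
      rw [horth c c' (Ne.symm hne)]
      ring
    · intro h; exact absurd (Finset.mem_univ c) h
  -- per-column bound
  have hcol : ∀ c, (∑ i, f i c ^ 2) * (∑ j, g j c ^ 2) ≤ τ ^ 2 := by
    intro c
    have hsA : ∑ i, f i c ^ 2 = (∑ i, A i c ^ 2) / sCol A B τ c := by
      rw [Finset.sum_div]
      apply Finset.sum_congr rfl; intro i _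
      rw [hf]
      simp only [clipA, Matrix.of_apply]
      rw [div_pow, Real.sq_sqrt (hspos c).le]
    have hsB : ∑ j, g j c ^ 2 = (∑ j, B j c ^ 2) / sCol A B τ c := by
      rw [Finset.sum_div]
      apply Finset.sum_congr rfl; intro j _
      rw [hg]
      simp only [clipB, Matrix.of_apply]
      rw [div_pow, Real.sq_sqrt (hspos c).le]
    rw [hsA, hsB, div_mul_div_comm]
    have hσsq : (∑ i, A i c ^ 2) * (∑ j, B j c ^ 2) = sigmaCol A B c ^ 2 := by
      rw [sigmaCol, colNorm, colNorm, mul_pow, Real.sq_sqrt (by positivity),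
        Real.sq_sqrt (by positivity)]
    rw [hσsq, ← sq]
    rw [div_le_iff₀ (pow_pos (hspos c) 2)]
    have hσle : sigmaCol A B c ≤ sCol A B τ c * τ := by
      have := le_max_right 1 (sigmaCol A B c / τ)
      calc sigmaCol A B c = sigmaCol A B c / τ * τ := by field_simp
        _ ≤ sCol A B τ c * τ := by
            apply mul_le_mul_of_nonneg_right (le_max_right _ _) hτ.le
    have hσ0 : 0 ≤ sigmaCol A B c := mul_nonneg (Real.sqrt_nonneg _) (Real.sqrt_nonneg _)
    calc sigmaCol A B c ^ 2 ≤ (sCol A B τ c * τ) ^ 2 := by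
          apply pow_le_pow_left₀ hσ0 hσle
      _ = τ ^ 2 * sCol A B τ c ^ 2 := by ring
  -- conclude
  rw [frobNorm, key2]
  have hsum : ∑ c, (∑ i, f i c ^ 2) * (∑ j, g j c ^ 2) ≤ (r : ℝ) * τ ^ 2 := by
    calc ∑ c, (∑ i, f i c ^ 2) * (∑ j, g j c ^ 2) ≤ ∑ _c : Fin r, τ ^ 2 :=
          Finset.sum_le_sum fun c _ => hcol c
      _ = (r : ℝ) * τ ^ 2 := by simp [mul_comm]
  calc Real.sqrt (∑ c, (∑ i, f i c ^ 2) * (∑ j, g j c ^ 2))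
      ≤ Real.sqrt ((r : ℝ) * τ ^ 2) := Real.sqrt_le_sqrt hsum
    _ = Real.sqrt r * τ := by
        rw [Real.sqrt_mul (Nat.cast_nonneg r), Real.sqrt_sq hτ.le]
end

section
/- (Corollary: perturbed output bound) For any A ∈ ℝ^{d_in × r}, B ∈ ℝ^{d_out × r}, scalar γ ≥ 0 and vector x ∈ ℝ^{d_in}, the perturbation term satisfies ‖γ · B (Aᵀ x)‖₂ ≤ γ · ‖A‖₂ · ‖B‖₂ · ‖x‖₂. In particular, if Ã, B̃ come from per-component clipping with threshold τ > 0 and the columns of Ã are pairwise orthogonal, then ‖γ · B̃ (Ãᵀ x)‖₂ ≤ γ · √r · τ · ‖x‖₂. -/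
open Matrix

/-- Euclidean (ℓ²) norm of a vector. -/
noncomputable def vecNorm {n : ℕ} (x : Fin n → ℝ) : ℝ :=
  Real.sqrt (∑ i, x i ^ 2)

open scoped Matrix.Norms.L2Operator in
lemma vecNorm_eq' {n : ℕ} (x : Fin n → ℝ) :
    vecNorm x = ‖(EuclideanSpace.equiv (Fin n) ℝ).symm x‖ := by
  rw [EuclideanSpace.norm_eq]
  simp [vecNorm, Real.norm_eq_abs, sq_abs]

lemma vecNorm_nonneg' {n : ℕ} (x : Fin n → ℝ) : 0 ≤ vecNorm x := Real.sqrt_nonneg _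

lemma vecNorm_smul' {n : ℕ} {γ : ℝ} (hγ : 0 ≤ γ) (y : Fin n → ℝ) :
    vecNorm (γ • y) = γ * vecNorm y := by
  simp only [vecNorm, Pi.smul_apply, smul_eq_mul, mul_pow, ← Finset.mul_sum]
  rw [Real.sqrt_mul (sq_nonneg _), Real.sqrt_sq hγ]

/-- Main analytic lemma: if the columns of `At` are pairwise orthogonal and the product of the
squared column norms of `At`, `Bt` is at most `τ²` per column, then
`‖Bt (Atᵀ x)‖ ≤ √r τ ‖x‖`. -/
lemma clipped_bound {din dout r : ℕ} (At : Matrix (Fin din) (Fin r) ℝ)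
    (Bt : Matrix (Fin dout) (Fin r) ℝ) (τ : ℝ) (hτ : 0 ≤ τ) (x : Fin din → ℝ)
    (hqp : ∀ c, (∑ i, At i c ^ 2) * (∑ j, Bt j c ^ 2) ≤ τ ^ 2)
    (hortho : ∀ c c' : Fin r, c ≠ c' → ∑ i, At i c * At i c' = 0) :
    vecNorm (Bt *ᵥ (Atᵀ *ᵥ x)) ≤ Real.sqrt r * τ * vecNorm x := by
  classical
  set v : Fin r → ℝ := fun c => ∑ i, At i c * x i with hv
  have hmv : Atᵀ *ᵥ x = v := by
    funext c
    simp [Matrix.mulVec, dotProduct, hv]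
  set q : Fin r → ℝ := fun c => ∑ i, At i c ^ 2 with hq
  set p : Fin r → ℝ := fun c => ∑ j, Bt j c ^ 2 with hp
  have hq0 : ∀ c, 0 ≤ q c := fun c => Finset.sum_nonneg fun i _ => sq_nonneg _
  have hp0 : ∀ c, 0 ≤ p c := fun c => Finset.sum_nonneg fun j _ => sq_nonneg _
  have hqv : ∀ c, q c = 0 → v c = 0 := by
    intro c hc
    have hall := (Finset.sum_eq_zero_iff_of_nonneg (fun i _ => sq_nonneg (At i c))).1 hc
    refine Finset.sum_eq_zero fun i _ => ?_
    have : At i c = 0 := by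
      have h := hall i (Finset.mem_univ i)
      exact pow_eq_zero_iff (two_ne_zero) |>.1 h
    simp [this]
  set T : Fin r → ℝ := fun c => if q c = 0 then 0 else v c ^ 2 / q c with hT
  have hT0 : ∀ c, 0 ≤ T c := by
    intro c
    by_cases hc : q c = 0
    · simp [hT, hc]
    · simp only [hT, hc, if_false]
      exact div_nonneg (sq_nonneg _) (hq0 c)
  -- Bessel's inequality from orthogonality
  have bessel : ∑ c, T c ≤ ∑ i, x i ^ 2 := by
    set u : Fin r → ℝ := fun c => if q c = 0 then 0 else v c / q c with hu
    have expand : (0:ℝ) ≤ ∑ i, (x i - ∑ c, u c * At i c) ^ 2 :=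
      Finset.sum_nonneg fun _ _ => sq_nonneg _
    have h2 : ∑ i, x i * ∑ c, u c * At i c = ∑ c, u c * v c := by
      calc ∑ i, x i * ∑ c, u c * At i c
          = ∑ i, ∑ c, u c * (At i c * x i) := by
            refine Finset.sum_congr rfl fun i _ => ?_
            rw [Finset.mul_sum]
            exact Finset.sum_congr rfl fun c _ => by ring
        _ = ∑ c, ∑ i, u c * (At i c * x i) := Finset.sum_comm
        _ = ∑ c, u c * v c := by
            refine Finset.sum_congr rfl fun c _ => ?_
            rw [← Finset.mul_sum]
    have h3 : ∑ i, (∑ c, u c * At i c) ^ 2 = ∑ c, u c ^ 2 * q c := by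
      calc ∑ i, (∑ c, u c * At i c) ^ 2
          = ∑ i, ∑ c, ∑ c', (u c * At i c) * (u c' * At i c') := by
            refine Finset.sum_congr rfl fun i _ => ?_
            rw [sq, Finset.sum_mul_sum]
        _ = ∑ c, ∑ c', (u c * u c') * ∑ i, At i c * At i c' := by
            rw [Finset.sum_comm]
            refine Finset.sum_congr rfl fun c _ => ?_
            rw [Finset.sum_comm]
            refine Finset.sum_congr rfl fun c' _ => ?_
            rw [Finset.mul_sum]
            exact Finset.sum_congr rfl fun i _ => by ring
        _ = ∑ c, u c ^ 2 * q c := by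
            refine Finset.sum_congr rfl fun c _ => ?_
            rw [Finset.sum_eq_single c]
            · rw [hq]; ring
            · intro c' _ hne
              rw [hortho c c' (Ne.symm hne), mul_zero]
            · intro hc; exact absurd (Finset.mem_univ c) hc
    have hTuv : ∀ c, u c * v c = T c := by
      intro c
      by_cases hc : q c = 0
      · simp [hu, hT, hc]
      · simp only [hu, hT, hc, if_false]
        rw [div_mul_eq_mul_div, ← sq]
    have hTuq : ∀ c, u c ^ 2 * q c = T c := by
      intro c
      by_cases hc : q c = 0
      · simp [hu, hT, hc]
      · simp only [hu, hT, hc, if_false]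
        field_simp
    have e1 : ∑ i, (x i - ∑ c, u c * At i c) ^ 2
        = (∑ i, x i ^ 2) - 2 * (∑ c, T c) + ∑ c, T c := by
      have : ∀ i, (x i - ∑ c, u c * At i c) ^ 2
          = x i ^ 2 - 2 * (x i * ∑ c, u c * At i c) + (∑ c, u c * At i c) ^ 2 := by
        intro i; ring
      rw [Finset.sum_congr rfl fun i _ => this i]
      rw [Finset.sum_add_distrib, Finset.sum_sub_distrib, ← Finset.mul_sum, h2, h3]
      rw [Finset.sum_congr rfl fun c _ => hTuv c, Finset.sum_congr rfl fun c _ => hTuq c]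
    rw [e1] at expand
    linarith
  -- triangle inequality over columns
  have hbv : ∀ c, vecNorm (fun j => v c * Bt j c) = |v c| * Real.sqrt (p c) := by
    intro c
    rw [vecNorm]
    have : ∑ j, (v c * Bt j c) ^ 2 = v c ^ 2 * p c := by
      rw [hp, Finset.mul_sum]
      exact Finset.sum_congr rfl fun j _ => by ring
    rw [this, Real.sqrt_mul (sq_nonneg _), Real.sqrt_sq_eq_abs]
  have tri : vecNorm (Bt *ᵥ v) ≤ ∑ c, |v c| * Real.sqrt (p c) := by
    have h1 : Bt *ᵥ v = ∑ c, (fun j => v c * Bt j c) := by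
      funext j
      rw [Finset.sum_apply]
      simp [Matrix.mulVec, dotProduct, mul_comm]
    rw [vecNorm_eq', h1]
    have h2 : (EuclideanSpace.equiv (Fin dout) ℝ).symm (∑ c, (fun j => v c * Bt j c))
        = ∑ c, (EuclideanSpace.equiv (Fin dout) ℝ).symm (fun j => v c * Bt j c) :=
      map_sum _ _ _
    rw [h2]
    refine (norm_sum_le _ _).trans ?_
    refine le_of_eq (Finset.sum_congr rfl fun c _ => ?_)
    rw [← vecNorm_eq', hbv c]
  -- Cauchy–Schwarz
  set g : Fin r → ℝ := fun c => if q c = 0 then 0 else |v c| / Real.sqrt (q c) with hg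
  set h : Fin r → ℝ := fun c => Real.sqrt (q c) * Real.sqrt (p c) with hh
  have hgh : ∀ c, |v c| * Real.sqrt (p c) = g c * h c := by
    intro c
    by_cases hc : q c = 0
    · simp [hg, hh, hc, hqv c hc]
    · have hqpos : 0 < q c := lt_of_le_of_ne (hq0 c) (Ne.symm hc)
      have hs : Real.sqrt (q c) ≠ 0 := ne_of_gt (Real.sqrt_pos.2 hqpos)
      simp only [hg, hh, hc, if_false]
      field_simp
  have hg2 : ∀ c, g c ^ 2 = T c := by
    intro c
    by_cases hc : q c = 0
    · simp [hg, hT, hc]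
    · simp only [hg, hT, hc, if_false]
      rw [div_pow, sq_abs, Real.sq_sqrt (hq0 c)]
  have hh2 : ∀ c, h c ^ 2 = q c * p c := by
    intro c
    rw [hh, mul_pow, Real.sq_sqrt (hq0 c), Real.sq_sqrt (hp0 c)]
  have cs : ∑ c, |v c| * Real.sqrt (p c)
      ≤ Real.sqrt (∑ c, T c) * Real.sqrt (∑ c, q c * p c) := by
    rw [Finset.sum_congr rfl fun c _ => hgh c]
    have hnn : 0 ≤ ∑ c, g c * h c := by
      refine Finset.sum_nonneg fun c _ => mul_nonneg ?_ ?_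
      · by_cases hc : q c = 0
        · simp [hg, hc]
        · simp only [hg, hc, if_false]
          exact div_nonneg (abs_nonneg _) (Real.sqrt_nonneg _)
      · exact mul_nonneg (Real.sqrt_nonneg _) (Real.sqrt_nonneg _)
    calc ∑ c, g c * h c = Real.sqrt ((∑ c, g c * h c) ^ 2) := (Real.sqrt_sq hnn).symm
      _ ≤ Real.sqrt ((∑ c, g c ^ 2) * ∑ c, h c ^ 2) :=
          Real.sqrt_le_sqrt (Finset.sum_mul_sq_le_sq_mul_sq _ _ _)
      _ = Real.sqrt (∑ c, T c) * Real.sqrt (∑ c, q c * p c) := by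
          rw [Finset.sum_congr rfl fun c _ => hg2 c, Finset.sum_congr rfl fun c _ => hh2 c,
            Real.sqrt_mul (Finset.sum_nonneg fun c _ => hT0 c)]
  -- sum of q*p bound
  have hsum_qp : Real.sqrt (∑ c, q c * p c) ≤ Real.sqrt r * τ := by
    have h1 : ∑ c, q c * p c ≤ (r : ℝ) * τ ^ 2 := by
      calc ∑ c, q c * p c ≤ ∑ _c : Fin r, τ ^ 2 := Finset.sum_le_sum fun c _ => hqp c
        _ = (r : ℝ) * τ ^ 2 := by simp [Finset.sum_const, Finset.card_univ]
    calc Real.sqrt (∑ c, q c * p c) ≤ Real.sqrt ((r : ℝ) * τ ^ 2) := Real.sqrt_le_sqrt h1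
      _ = Real.sqrt r * τ := by
          rw [Real.sqrt_mul (Nat.cast_nonneg r), Real.sqrt_sq hτ]
  have hbessel' : Real.sqrt (∑ c, T c) ≤ vecNorm x := by
    rw [vecNorm]
    exact Real.sqrt_le_sqrt bessel
  calc vecNorm (Bt *ᵥ (Atᵀ *ᵥ x)) = vecNorm (Bt *ᵥ v) := by rw [hmv]
    _ ≤ ∑ c, |v c| * Real.sqrt (p c) := tri
    _ ≤ Real.sqrt (∑ c, T c) * Real.sqrt (∑ c, q c * p c) := cs
    _ ≤ vecNorm x * (Real.sqrt r * τ) :=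
        mul_le_mul hbessel' hsum_qp (Real.sqrt_nonneg _) (vecNorm_nonneg' x)
    _ = Real.sqrt r * τ * vecNorm x := by ring

open scoped Matrix.Norms.L2Operator in
/-- Perturbed-output bound: `‖γ · B(Aᵀx)‖₂ ≤ γ‖A‖₂‖B‖₂‖x‖₂`; in particular, for the
clipped factors with pairwise orthogonal columns of `Ã`,
`‖γ · B̃(Ãᵀx)‖₂ ≤ γ √r τ ‖x‖₂`. -/
theorem perturbation_output_bound {din dout r : ℕ}
    (A : Matrix (Fin din) (Fin r) ℝ) (B : Matrix (Fin dout) (Fin r) ℝ)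
    (γ : ℝ) (hγ : 0 ≤ γ) (x : Fin din → ℝ) (τ : ℝ) (hτ : 0 < τ) :
    vecNorm (γ • (B *ᵥ (Aᵀ *ᵥ x))) ≤ γ * specNorm A * specNorm B * vecNorm x ∧
    ((∀ c c' : Fin r, c ≠ c' → ∑ i, clipA A B τ i c * clipA A B τ i c' = 0) →
      vecNorm (γ • (clipB A B τ *ᵥ ((clipA A B τ)ᵀ *ᵥ x))) ≤
        γ * Real.sqrt r * τ * vecNorm x) := by
  have specNorm_eq : ∀ {m n : ℕ} (M : Matrix (Fin m) (Fin n) ℝ), specNorm M = ‖M‖ :=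
    fun M => rfl
  constructor
  · -- first part
    rw [vecNorm_smul' hγ]
    have h1 : vecNorm (B *ᵥ (Aᵀ *ᵥ x)) ≤ specNorm B * vecNorm (Aᵀ *ᵥ x) := by
      rw [vecNorm_eq', vecNorm_eq', specNorm_eq]
      exact B.l2_opNorm_mulVec ((EuclideanSpace.equiv (Fin r) ℝ).symm (Aᵀ *ᵥ x))
    have h2 : vecNorm (Aᵀ *ᵥ x) ≤ specNorm A * vecNorm x := by
      rw [vecNorm_eq', vecNorm_eq', specNorm_eq]
      have hT : specNorm Aᵀ = specNorm A := by
        rw [specNorm_eq, specNorm_eq, ← Matrix.conjTranspose_eq_transpose_of_trivial]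
        exact Matrix.l2_opNorm_conjTranspose A
      calc ‖(EuclideanSpace.equiv (Fin r) ℝ).symm (Aᵀ *ᵥ x)‖
          ≤ ‖Aᵀ‖ * ‖(EuclideanSpace.equiv (Fin din) ℝ).symm x‖ := Aᵀ.l2_opNorm_mulVec ((EuclideanSpace.equiv (Fin din) ℝ).symm x)
        _ = ‖A‖ * ‖(EuclideanSpace.equiv (Fin din) ℝ).symm x‖ := by
            rw [← specNorm_eq, hT, specNorm_eq]
    have hB0 : (0:ℝ) ≤ specNorm B := by rw [specNorm_eq]; exact norm_nonneg _
    have hA0 : (0:ℝ) ≤ specNorm A := by rw [specNorm_eq]; exact norm_nonneg _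
    calc γ * vecNorm (B *ᵥ (Aᵀ *ᵥ x)) ≤ γ * (specNorm B * (specNorm A * vecNorm x)) := by
          refine mul_le_mul_of_nonneg_left ?_ hγ
          exact h1.trans (mul_le_mul_of_nonneg_left h2 hB0)
      _ = γ * specNorm A * specNorm B * vecNorm x := by ring
  · -- second part
    intro hortho
    rw [vecNorm_smul' hγ]
    have hqp : ∀ c, (∑ i, clipA A B τ i c ^ 2) * (∑ j, clipB A B τ j c ^ 2) ≤ τ ^ 2 := by
      intro c
      set s := sCol A B τ c with hs
      have hs1 : (1:ℝ) ≤ s := le_max_left _ _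
      have hspos : (0:ℝ) < s := lt_of_lt_of_le one_pos hs1
      have hA : ∑ i, clipA A B τ i c ^ 2 = (∑ i, A i c ^ 2) / s := by
        rw [Finset.sum_div]
        refine Finset.sum_congr rfl fun i _ => ?_
        simp only [clipA, Matrix.of_apply]
        rw [div_pow, Real.sq_sqrt hspos.le]
      have hB : ∑ j, clipB A B τ j c ^ 2 = (∑ j, B j c ^ 2) / s := by
        rw [Finset.sum_div]
        refine Finset.sum_congr rfl fun j _ => ?_
        simp only [clipB, Matrix.of_apply]
        rw [div_pow, Real.sq_sqrt hspos.le]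
      have hσsq : sigmaCol A B c ^ 2 = (∑ i, A i c ^ 2) * (∑ j, B j c ^ 2) := by
        rw [sigmaCol, colNorm, colNorm, mul_pow,
          Real.sq_sqrt (Finset.sum_nonneg fun i _ => sq_nonneg _),
          Real.sq_sqrt (Finset.sum_nonneg fun j _ => sq_nonneg _)]
      have hσ0 : 0 ≤ sigmaCol A B c :=
        mul_nonneg (Real.sqrt_nonneg _) (Real.sqrt_nonneg _)
      have hστ : sigmaCol A B c ≤ s * τ := by
        have hle : sigmaCol A B c / τ ≤ s := le_max_right _ _
        exact (div_le_iff₀ hτ).1 hle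
      calc (∑ i, clipA A B τ i c ^ 2) * (∑ j, clipB A B τ j c ^ 2)
          = (sigmaCol A B c / s) ^ 2 := by
            rw [hA, hB, div_mul_div_comm, ← hσsq, div_pow, ← sq]
        _ ≤ τ ^ 2 := by
            refine pow_le_pow_left₀ (div_nonneg hσ0 hspos.le) ?_ 2
            rw [div_le_iff₀ hspos]
            linarith [hστ]
    have key := clipped_bound (clipA A B τ) (clipB A B τ) τ hτ.le x hqp hortho
    calc γ * vecNorm (clipB A B τ *ᵥ ((clipA A B τ)ᵀ *ᵥ x))
        ≤ γ * (Real.sqrt r * τ * vecNorm x) := mul_le_mul_of_nonneg_left key hγ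
      _ = γ * Real.sqrt r * τ * vecNorm x := by ring
end
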